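/- Let H be a history of the Simpler Lazy Set algorithm and B a Contains(x) execution with pseudo-path a₀,…,aₘ and state sequence S_{j₀},…,S_{jₘ}. Suppose address a with Val(a)=x is on the main branch throughout the interval covering B (no Rem action removing a occurs before End(B)). Then for every k ≤ m, a is on the path from aₖ to Tail in S_{jₖ}; consequently Val(aₘ) = x and B returns status 1. -/

import Mathlib

/-- A state structure of the Simpler Lazy Set algorithm over the address
type `A` with fixed Head address `H` and Tail address `T`: a set of active
addresses, the `next` fields, and the key values (in ℕ ∪ {-1, ∞},
modelled inside `WithTop ℤ`). -/
structure SState (A : Type) (H T : A) where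
  Active : Set A
  Next : A → A
  Val : A → WithTop ℤ

variable {A : Type} {H T : A}

/-- A normal state: H and T are active with values -1 and ∞, only finitely
many addresses are active, other active addresses have values in ℕ, and
`Next` maps an active address (≠ T) to an active address of strictly larger
value. -/
def LSNormal (S : SState A H T) : Prop :=
  H ∈ S.Active ∧ T ∈ S.Active ∧ S.Active.Finite ∧
  S.Val H = ((-1 : ℤ) : WithTop ℤ) ∧ S.Val T = ⊤ ∧
  (∀ a ∈ S.Active, a ≠ H → a ≠ T → ∃ n : ℕ, S.Val a = ((n : ℤ) : WithTop ℤ)) ∧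
  (∀ a ∈ S.Active, a ≠ T → S.Next a ∈ S.Active ∧ S.Val a < S.Val (S.Next a))

/-- `l` is a path (a nonempty `Next`-chain of active addresses, not passing
through T except possibly at the end) from `a` to `b` in state `S`. -/
def LSIsPathFrom (S : SState A H T) (l : List A) (a b : A) : Prop :=
  l ≠ [] ∧ l.head? = some a ∧ l.getLast? = some b ∧
  (∀ x ∈ l, x ∈ S.Active) ∧
  l.Chain' (fun x y => x ≠ T ∧ S.Next x = y)

/-- `b` is reachable from `a` (b is on the path from a towards Tail). -/
def LSReaches (S : SState A H T) (a b : A) : Prop :=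
  ∃ l : List A, LSIsPathFrom S l a b

/-- `a` is on the main branch (the path from Head to Tail). -/
def LSOnMain (S : SState A H T) (a : A) : Prop :=
  LSReaches S H a

/-- A stuttering step: nothing observable changes (invocations, responses,
reads, failed operations, Add¹ and Rem⁰ actions). -/
def LSIsStutter (S1 S2 : SState A H T) : Prop :=
  S1.Active = S2.Active ∧ S1.Next = S2.Next ∧ S1.Val = S2.Val

/-- An Add⁰ step: a fresh address `a` of value `x` is activated and spliced
into the main branch after `p`. -/
def LSIsAddStep (S1 S2 : SState A H T) : Prop :=
  ∃ (x : ℕ) (a p : A), a ∉ S1.Active ∧ p ∈ S1.Active ∧ p ≠ T ∧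
    LSOnMain S1 p ∧
    S1.Val p < ((x : ℤ) : WithTop ℤ) ∧
    ((x : ℤ) : WithTop ℤ) < S1.Val (S1.Next p) ∧
    S2.Active = insert a S1.Active ∧
    (∀ y, y ≠ a → S2.Val y = S1.Val y) ∧ S2.Val a = ((x : ℤ) : WithTop ℤ) ∧
    (∀ y, y ≠ a → y ≠ p → S2.Next y = S1.Next y) ∧
    S2.Next p = a ∧ S2.Next a = S1.Next p

/-- A Rem¹ step: the main-branch address `d` is physically removed by
redirecting the `Next` pointer of its main-branch predecessor `c`. -/
def LSIsRemStep (S1 S2 : SState A H T) : Prop :=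
  ∃ c d : A, c ∈ S1.Active ∧ d ∈ S1.Active ∧ c ≠ T ∧ d ≠ T ∧ d ≠ H ∧
    S1.Next c = d ∧ LSOnMain S1 c ∧ LSOnMain S1 d ∧
    S2.Active = S1.Active ∧ S2.Val = S1.Val ∧
    (∀ y, y ≠ c → S2.Next y = S1.Next y) ∧ S2.Next c = S1.Next d

/-- An execution triple of the Simpler Lazy Set algorithm. -/
def LSStep (S1 S2 : SState A H T) : Prop :=
  LSIsStutter S1 S2 ∨ LSIsAddStep S1 S2 ∨ LSIsRemStep S1 S2

open Relation

/-- One step of the successor relation used to describe reachability. -/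
def lstep (S : SState A H T) (u v : A) : Prop :=
  u ∈ S.Active ∧ u ≠ T ∧ S.Next u = v

lemma lstep_rightUnique (S : SState A H T) : Relator.RightUnique (lstep S) :=
  fun _ _ _ h h' => h.2.2 ▸ h'.2.2 ▸ rfl

lemma pathFrom_imp (S : SState A H T) :
    ∀ (l : List A) (a b : A), LSIsPathFrom S l a b →
      b ∈ S.Active ∧ ReflTransGen (lstep S) a b := by
  intro l
  induction l with
  | nil => intro a b h; exact absurd rfl h.1
  | cons c l ih =>
    intro a b h
    obtain ⟨-, hhd, hlast, hact, hch⟩ := h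
    simp only [List.head?_cons, Option.some.injEq] at hhd
    subst hhd
    cases l with
    | nil =>
      simp only [List.getLast?_singleton, Option.some.injEq] at hlast
      subst hlast
      exact ⟨hact _ (by simp), ReflTransGen.refl⟩
    | cons d l' =>
      simp only [List.Chain', List.isChain_cons_cons] at hch
      obtain ⟨⟨hcT, hnx⟩, hch2⟩ := hch
      have hrest : LSIsPathFrom S (d :: l') d b :=
        ⟨by simp, rfl, by rw [← List.getLast?_cons_cons (b := d)]; exact hlast,
          fun x hx => hact x (List.mem_cons_of_mem _ hx), hch2⟩
      obtain ⟨hb, hr⟩ := ih d b hrest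
      exact ⟨hb, ReflTransGen.head ⟨hact _ (by simp), hcT, hnx⟩ hr⟩

lemma rtg_imp_reaches (S : SState A H T) {a b : A} (hb : b ∈ S.Active)
    (h : ReflTransGen (lstep S) a b) : LSReaches S a b := by
  induction h using Relation.ReflTransGen.head_induction_on with
  | refl =>
    exact ⟨[b], by simp, by simp, by simp, by simpa using hb, List.isChain_singleton _⟩
  | @head u v hstep hrest ih =>
    obtain ⟨l, hne, hhd, hlast, hact, hch⟩ := ih
    cases l with
    | nil => exact absurd rfl hne
    | cons w l' =>
      simp only [List.head?_cons, Option.some.injEq] at hhd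
      subst hhd
      refine ⟨u :: w :: l', by simp, by simp, ?_, ?_, ?_⟩
      · rw [List.getLast?_cons_cons]; exact hlast
      · intro y hy
        rcases List.mem_cons.1 hy with rfl | hy
        · exact hstep.1
        · exact hact _ hy
      · simp only [List.Chain', List.isChain_cons_cons]
        exact ⟨⟨hstep.2.1, hstep.2.2⟩, hch⟩

lemma reaches_rtg (S : SState A H T) {a b : A} (h : LSReaches S a b) :
    b ∈ S.Active ∧ ReflTransGen (lstep S) a b := by
  obtain ⟨l, hl⟩ := h
  exact pathFrom_imp S l a b hl

lemma rtg_val_le (S : SState A H T) (hS : LSNormal S) {a b : A}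
    (h : ReflTransGen (lstep S) a b) : S.Val a ≤ S.Val b := by
  induction h with
  | refl => exact le_rfl
  | tail h1 h2 ih =>
    exact ih.trans (le_of_lt (h2.2.2 ▸ (hS.2.2.2.2.2.2 _ h2.1 h2.2.1).2))

lemma no_back (S : SState A H T) (hS : LSNormal S) {c d : A}
    (hc1 : lstep S c d) (h : ReflTransGen (lstep S) d c) : False := by
  have h1 : S.Val d ≤ S.Val c := rtg_val_le S hS h
  have h2 : S.Val c < S.Val d :=
    hc1.2.2 ▸ (hS.2.2.2.2.2.2 _ hc1.1 hc1.2.1).2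
  exact absurd (h1.trans_lt h2) (lt_irrefl _)

lemma uniq_pred (S : SState A H T) (hS : LSNormal S) {c e d : A}
    (hc : ReflTransGen (lstep S) H c) (he : ReflTransGen (lstep S) H e)
    (hc1 : lstep S c d) (he1 : lstep S e d) : c = e := by
  rcases ReflTransGen.total_of_right_unique (lstep_rightUnique S) hc he with h | h
  · rcases h.cases_head with rfl | ⟨w, hw, hwe⟩
    · rfl
    · have : w = d := lstep_rightUnique S hw hc1
      subst this
      exact (no_back S hS he1 hwe).elim
  · rcases h.cases_head with rfl | ⟨w, hw, hwe⟩
    · rfl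
    · have : w = d := lstep_rightUnique S hw he1
      subst this
      exact (no_back S hS hc1 hwe).elim

lemma ls_active_mono {S1 S2 : SState A H T} (hs : LSStep S1 S2) :
    S1.Active ⊆ S2.Active := by
  rcases hs with ⟨hA, -, -⟩ | ⟨x, a, p, h⟩ | ⟨c, d, h⟩
  · rw [hA]
  · rw [h.2.2.2.2.2.2.1]; exact Set.subset_insert _ _
  · rw [h.2.2.2.2.2.2.2.2.1]

lemma ls_val_pres {S1 S2 : SState A H T} (hs : LSStep S1 S2) {y : A}
    (hy : y ∈ S1.Active) : S2.Val y = S1.Val y := by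
  rcases hs with ⟨-, -, hV⟩ | ⟨x, a, p, h⟩ | ⟨c, d, h⟩
  · rw [hV]
  · exact h.2.2.2.2.2.2.2.1 y (fun hya => h.1 (hya ▸ hy))
  · rw [h.2.2.2.2.2.2.2.2.2.1]

lemma ls_preserve {S1 S2 : SState A H T} (h1 : LSNormal S1) (h2 : LSNormal S2)
    (hs : LSStep S1 S2) {addr : A} (haddr : LSOnMain S2 addr) {u : A}
    (h : ReflTransGen (lstep S1) u addr) : ReflTransGen (lstep S2) u addr := by
  rcases hs with ⟨hA, hN, hV⟩ | hAdd | hRem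
  · exact ReflTransGen.mono (p := lstep S2) (fun x y (hxy : lstep S1 x y) => (⟨hA ▸ hxy.1, hxy.2.1, hN ▸ hxy.2.2⟩ : lstep S2 x y)) _ _ h
  · clear haddr
    obtain ⟨x, a, p, hafresh, hpact, hpT, -, -, -, hA2, hVne, hVa, hNne, hNp, hNa⟩ := hAdd
    have haT : a ≠ T := fun hEq => hafresh (hEq ▸ h1.2.1)
    have step2 : ∀ {b c : A}, lstep S1 b c → ReflTransGen (lstep S2) b c := by
      intro b c hbc
      have hba : b ≠ a := fun hEq => hafresh (hEq ▸ hbc.1)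
      by_cases hbp : b = p
      · subst hbp
        have s1 : lstep S2 b a := ⟨hA2 ▸ Set.mem_insert_of_mem _ hbc.1, hbc.2.1, hNp⟩
        have s2 : lstep S2 a c := ⟨hA2 ▸ Set.mem_insert _ _, haT, hNa.trans hbc.2.2⟩
        exact (ReflTransGen.single s1).tail s2
      · exact ReflTransGen.single
          ⟨hA2 ▸ Set.mem_insert_of_mem _ hbc.1, hbc.2.1, (hNne b hba hbp) ▸ hbc.2.2⟩
    induction h with
    | refl => exact ReflTransGen.refl
    | tail hr hst ih => exact ih.trans (step2 hst)
  · obtain ⟨cc, dd, hcact, hdact, hcT, hdT, hdH, hNcd, hcmain, hdmain, hA2, hV2, hNne, hNc⟩ := hRem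
    have hVcd : S1.Val cc < S1.Val dd := hNcd ▸ (h1.2.2.2.2.2.2 _ hcact hcT).2
    have hcd : cc ≠ dd := fun hEq => absurd (hEq ▸ hVcd) (lt_irrefl _)
    have hHc : ReflTransGen (lstep S1) H cc := (reaches_rtg S1 hcmain).2
    have hHd : ReflTransGen (lstep S1) H dd := (reaches_rtg S1 hdmain).2
    have key : ∀ z, ReflTransGen (lstep S2) H z →
        ReflTransGen (lstep S1) H z ∧ z ≠ dd := by
      intro z hz
      induction hz with
      | refl => exact ⟨ReflTransGen.refl, fun hEq => hdH hEq.symm⟩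
      | @tail y z' hy hst ih =>
        by_cases hyc : y = cc
        · subst hyc
          have hz' : z' = S1.Next dd := hst.2.2.symm.trans hNc
          have s1 : lstep S1 dd z' := ⟨hdact, hdT, hz'.symm⟩
          refine ⟨hHd.tail s1, ?_⟩
          have hvlt : S1.Val dd < S1.Val z' := by
            rw [hz']; exact (h1.2.2.2.2.2.2 dd hdact hdT).2
          exact fun hEq => absurd (hEq ▸ hvlt) (lt_irrefl _)
        · have s1 : lstep S1 y z' :=
            ⟨hA2 ▸ hst.1, hst.2.1, (hNne y hyc) ▸ hst.2.2⟩
          refine ⟨ih.1.tail s1, ?_⟩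
          intro hEq
          subst hEq
          exact hyc (uniq_pred S1 h1 ih.1 hHc s1 ⟨hcact, hcT, hNcd⟩)
    have haddr' := reaches_rtg S2 haddr
    have haddrd : addr ≠ dd := (key addr haddr'.2).2
    clear haddr haddr'
    induction h using Relation.ReflTransGen.head_induction_on with
    | refl => exact ReflTransGen.refl
    | @head u' v hst hrest ih =>
      by_cases huc : u' = cc
      · subst huc
        have hvd : v = dd := hst.2.2.symm.trans hNcd
        subst hvd
        rcases ih.cases_head with hEq | ⟨w, hw, hwrest⟩
        · exact absurd hEq.symm haddrd
        · have hw2 : S2.Next u' = w :=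
            hNc.trans ((hNne v hcd.symm).symm.trans hw.2.2)
          exact ReflTransGen.head ⟨hA2 ▸ hcact, hcT, hw2⟩ hwrest
      · exact ReflTransGen.head
          ⟨hA2 ▸ hst.1, hst.2.1, (hNne u' huc) ▸ hst.2.2⟩ ih

lemma ls_transport (Ss : ℕ → SState A H T) (hnorm : ∀ i, LSNormal (Ss i))
    (hstep : ∀ i, LSStep (Ss i) (Ss (i + 1))) (addr u : A)
    (i0 i1 : ℕ) (h01 : i0 ≤ i1)
    (hm : ∀ i, i0 < i → i ≤ i1 → LSOnMain (Ss i) addr)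
    (h : ReflTransGen (lstep (Ss i0)) u addr) :
    ReflTransGen (lstep (Ss i1)) u addr := by
  induction i1, h01 using Nat.le_induction with
  | base => exact h
  | succ n hn ih =>
    exact ls_preserve (hnorm n) (hnorm (n + 1)) (hstep n)
      (hm (n + 1) (Nat.lt_succ_of_le hn) le_rfl)
      (ih (fun i hi1 hi2 => hm i hi1 (hi2.trans (Nat.le_succ n))))

lemma ls_val_stable (Ss : ℕ → SState A H T)
    (hstep : ∀ i, LSStep (Ss i) (Ss (i + 1))) (y : A)
    (i0 i1 : ℕ) (h01 : i0 ≤ i1) (hy : y ∈ (Ss i0).Active) :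
    y ∈ (Ss i1).Active ∧ (Ss i1).Val y = (Ss i0).Val y := by
  induction i1, h01 using Nat.le_induction with
  | base => exact ⟨hy, rfl⟩
  | succ n hn ih =>
    exact ⟨ls_active_mono (hstep n) ih.1, (ls_val_pres (hstep n) ih.1).trans ih.2⟩

/-- Let H be a history of the Simpler Lazy Set algorithm and B
a Contains(x) execution with pseudo-path a₀, …, aₘ and state sequence
S_{j₀}, …, S_{jₘ}. Suppose address `addr` with Val(addr) = x is on the main
branch throughout the interval covering B (no Rem action removing it occurs
before End(B)). Then for every k ≤ m, `addr` is on the path from aₖ to Tail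
in S_{jₖ}; consequently Val(aₘ) = x (and B returns status 1). -/
theorem stmt19 (Ss : ℕ → SState A H T)
    (hnorm : ∀ i, LSNormal (Ss i))
    (hstep : ∀ i, LSStep (Ss i) (Ss (i + 1)))
    (x m : ℕ) (a : ℕ → A) (j : ℕ → ℕ)
    (hj : ∀ k l, k < l → l ≤ m → j k < j l)
    (ha0 : a 0 = H)
    (hact : ∀ k ≤ m, a k ∈ (Ss (j k)).Active)
    (hsucc : ∀ k < m, a (k + 1) = (Ss (j (k + 1))).Next (a k))
    (hloop : ∀ k < m, (Ss (j k)).Val (a k) < ((x : ℤ) : WithTop ℤ))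
    (hstop : ((x : ℤ) : WithTop ℤ) ≤ (Ss (j m)).Val (a m))
    (addr : A)
    (hval : ∀ i, j 0 ≤ i → i ≤ j m → (Ss i).Val addr = ((x : ℤ) : WithTop ℤ))
    (hmain : ∀ i, j 0 ≤ i → i ≤ j m → LSOnMain (Ss i) addr) :
    (∀ k ≤ m, LSReaches (Ss (j k)) (a k) addr) ∧
    (Ss (j m)).Val (a m) = ((x : ℤ) : WithTop ℤ) := by
  have hj0 : ∀ k, k ≤ m → j 0 ≤ j k := by
    intro k hk
    rcases Nat.eq_zero_or_pos k with rfl | hkpos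
    · exact le_rfl
    · exact (hj 0 k hkpos hk).le
  have hjm : ∀ k, k ≤ m → j k ≤ j m := by
    intro k hk
    rcases eq_or_lt_of_le hk with rfl | hklt
    · exact le_rfl
    · exact (hj k m hklt le_rfl).le
  have key : ∀ k, k ≤ m → Relation.ReflTransGen (lstep (Ss (j k))) (a k) addr := by
    intro k
    induction k with
    | zero =>
      intro _
      rw [ha0]
      exact (reaches_rtg _ (hmain (j 0) le_rfl (hjm 0 (Nat.zero_le m)))).2
    | succ k ih =>
      intro hk1
      have hklt : k < m := Nat.lt_of_succ_le hk1
      have ihk := ih hklt.le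
      have hjlt : j k < j (k + 1) := hj k (k + 1) (Nat.lt_succ_self k) hk1
      have htrans : Relation.ReflTransGen (lstep (Ss (j (k + 1)))) (a k) addr :=
        ls_transport Ss hnorm hstep addr (a k) (j k) (j (k + 1)) hjlt.le
          (fun i hi1 hi2 =>
            hmain i ((hj0 k hklt.le).trans hi1.le) (hi2.trans (hjm (k + 1) hk1))) ihk
      have hstable := ls_val_stable Ss hstep (a k) (j k) (j (k + 1)) hjlt.le
        (hact k hklt.le)
      have hlt : (Ss (j (k + 1))).Val (a k) < ((x : ℤ) : WithTop ℤ) := by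
        rw [hstable.2]; exact hloop k hklt
      have hne : a k ≠ addr := by
        intro hEq
        rw [hEq, hval (j (k + 1)) (hj0 (k + 1) hk1) (hjm (k + 1) hk1)] at hlt
        exact absurd hlt (lt_irrefl _)
      rcases htrans.cases_head with hEq | ⟨w, hw, hwrest⟩
      · exact absurd hEq hne
      · rw [hsucc k hklt, hw.2.2]
        exact hwrest
  constructor
  · intro k hk
    exact rtg_imp_reaches _
      (reaches_rtg _ (hmain (j k) (hj0 k hk) (hjm k hk))).1 (key k hk)
  · have h1 : (Ss (j m)).Val (a m) ≤ (Ss (j m)).Val addr :=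
      rtg_val_le _ (hnorm (j m)) (key m le_rfl)
    rw [hval (j m) (hj0 m le_rfl) le_rfl] at h1
    exact le_antisymm h1 hstop
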